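/- arXiv:2202.08319 — 3 statements merged into one kernel-verified Lean document; each statement's English description precedes it below -/
import Mathlib

section
/- Let R be a commutative integral domain with 1, let c ∈ R be a nonzero element, let u ∈ R be a unit with u - 1 ∈ c²R, and let A = [[a, b], [c, d]] ∈ SL₂(R). Set x ∈ R to be the element with u⁴ - 1 = cx (which exists since u - 1 ∈ c²R), and set t := ax. Then t ∈ cR, and the matrix Y := E₁₂(t) A⁻¹ E₁₂(-t) h(u²) A h(u⁻²) is upper triangular of the form [[u⁻⁴, q], [0, u⁴]] for some q ∈ cR. -/
open Matrix

def E12 {R : Type*} [CommRing R] (x : R) : Matrix.SpecialLinearGroup (Fin 2) R :=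
  ⟨!![1, x; 0, 1], by simp [Matrix.det_fin_two_of]⟩

def E21 {R : Type*} [CommRing R] (x : R) : Matrix.SpecialLinearGroup (Fin 2) R :=
  ⟨!![1, 0; x, 1], by simp [Matrix.det_fin_two_of]⟩

def hDiag {R : Type*} [CommRing R] (u : Rˣ) : Matrix.SpecialLinearGroup (Fin 2) R :=
  ⟨!![(u : R), 0; 0, ((u⁻¹ : Rˣ) : R)], by simp [Matrix.det_fin_two_of]⟩

def E2 (R : Type*) [CommRing R] : Subgroup (Matrix.SpecialLinearGroup (Fin 2) R) :=
  Subgroup.closure {M | ∃ x : R, M = E12 x ∨ M = E21 x}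

def E2I (R : Type*) [CommRing R] (I : Ideal R) :
    Subgroup (Matrix.SpecialLinearGroup (Fin 2) R) :=
  Subgroup.closure {M | ∃ g ∈ E2 R, ∃ x ∈ I, M = g * E12 x * g⁻¹}

/-!
Write `A = [[a, b], [c, d]]`. Then `Y = (E₁₂(t) A E₁₂(-t))⁻¹ · h(u²) A h(u²)⁻¹`, where the first
factor has bottom row `(-c, a + tc)` and the second has bottom row `(u⁻⁴ c, d)`. Since
`tc = a(u⁴ - 1)`, the bottom row of `Y` is `(0, u⁴)`, and `det Y = 1` forces the top-left entry
`u⁻⁴`. Modulo `c` we have `t ≡ 0` and `u⁴ ≡ 1`, so the top-right entry is `≡ bd(u⁴ - 1) ≡ 0`.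
Finally `t ∈ cR` because `c² ∣ u - 1 ∣ u⁴ - 1 = cx` and `c` is cancellable.
-/

open scoped MatrixGroups

section
variable {R : Type*} [CommRing R]

theorem dvd_of_sq_dvd_sub_one_of_pow_sub_one_eq_mul [IsDomain R] {c u x : R} {n : ℕ}
    (hc : c ≠ 0) (hu : c ^ 2 ∣ u - 1) (hx : u ^ n - 1 = c * x) : c ∣ x := by
  have hcx : c * c ∣ c * x := by
    rw [← pow_two, ← hx]
    simpa using hu.trans (sub_dvd_pow_sub_pow u 1 n)
  exact (mul_dvd_mul_iff_left hc).mp hcx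

theorem Matrix.SpecialLinearGroup.coe_apply_zero_zero_eq_inv (M : SL(2, R)) (u : Rˣ)
    (h10 : M 1 0 = 0) (h11 : M 1 1 = u) : M 0 0 = ↑u⁻¹ := by
  have hdet := M.det_coe
  rw [det_fin_two, h10, h11, mul_zero, sub_zero] at hdet
  exact Units.eq_inv_of_mul_eq_one_right hdet

@[simp]
theorem coe_E12 (x : R) : (E12 x : Matrix (Fin 2) (Fin 2) R) = !![1, x; 0, 1] := rfl

@[simp]
theorem coe_hDiag (u : Rˣ) :
    (hDiag u : Matrix (Fin 2) (Fin 2) R) = !![(u : R), 0; 0, ((u⁻¹ : Rˣ) : R)] := rfl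

theorem coe_E12_mul_inv_mul_E12_neg (t : R) (A : SL(2, R)) :
    ((E12 t * A⁻¹ * E12 (-t) : SL(2, R)) : Matrix (Fin 2) (Fin 2) R) =
      !![A 1 1 - t * A 1 0, t * (A 0 0 - A 1 1) + t ^ 2 * A 1 0 - A 0 1;
        -A 1 0, A 0 0 + t * A 1 0] := by
  rw [Matrix.SpecialLinearGroup.coe_mul, Matrix.SpecialLinearGroup.coe_mul,
    Matrix.SpecialLinearGroup.coe_inv, adjugate_fin_two, coe_E12, coe_E12, mul_fin_two, mul_fin_two]
  ext i j
  fin_cases i <;> fin_cases j <;>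
    dsimp only [Fin.zero_eta, Fin.mk_one, of_apply, cons_val_zero, cons_val_one] <;> ring

theorem coe_hDiag_mul_mul_hDiag_inv (w : Rˣ) (A : SL(2, R)) :
    ((hDiag w * A * hDiag w⁻¹ : SL(2, R)) : Matrix (Fin 2) (Fin 2) R) =
      !![A 0 0, (w : R) ^ 2 * A 0 1; ((w⁻¹ : Rˣ) : R) ^ 2 * A 1 0, A 1 1] := by
  rw [Matrix.SpecialLinearGroup.coe_mul, Matrix.SpecialLinearGroup.coe_mul, coe_hDiag, coe_hDiag,
    inv_inv, eta_fin_two (A : Matrix (Fin 2) (Fin 2) R), mul_fin_two, mul_fin_two]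
  ext i j
  fin_cases i <;> fin_cases j <;>
    dsimp only [Fin.zero_eta, Fin.mk_one, of_apply, cons_val_zero, cons_val_one]
  · linear_combination A 0 0 * w.mul_inv
  · ring
  · ring
  · linear_combination A 1 1 * w.inv_mul

theorem coe_E12_conj_inv_mul_hDiag_conj (t : R) (w : Rˣ) (A : SL(2, R)) :
    ((E12 t * A⁻¹ * E12 (-t) * hDiag w * A * hDiag w⁻¹ : SL(2, R)) :
        Matrix (Fin 2) (Fin 2) R) =
      !![(A 1 1 - t * A 1 0) * A 0 0
            + (t * (A 0 0 - A 1 1) + t ^ 2 * A 1 0 - A 0 1) * (((w⁻¹ : Rˣ) : R) ^ 2 * A 1 0),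
          (A 1 1 - t * A 1 0) * ((w : R) ^ 2 * A 0 1)
            + (t * (A 0 0 - A 1 1) + t ^ 2 * A 1 0 - A 0 1) * A 1 1;
        -A 1 0 * A 0 0 + (A 0 0 + t * A 1 0) * (((w⁻¹ : Rˣ) : R) ^ 2 * A 1 0),
          -A 1 0 * ((w : R) ^ 2 * A 0 1) + (A 0 0 + t * A 1 0) * A 1 1] := by
  rw [mul_assoc _ (hDiag w), mul_assoc _ (hDiag w * A), Matrix.SpecialLinearGroup.coe_mul,
    coe_E12_mul_inv_mul_E12_neg, coe_hDiag_mul_mul_hDiag_inv, mul_fin_two]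

variable {t : R} {w : Rˣ} {A : SL(2, R)}

theorem coe_E12_conj_inv_mul_hDiag_conj_eq (htc : t * A 1 0 = A 0 0 * ((w : R) ^ 2 - 1)) :
    ((E12 t * A⁻¹ * E12 (-t) * hDiag w * A * hDiag w⁻¹ : SL(2, R)) :
        Matrix (Fin 2) (Fin 2) R) =
      !![(((w ^ 2)⁻¹ : Rˣ) : R), (E12 t * A⁻¹ * E12 (-t) * hDiag w * A * hDiag w⁻¹ : SL(2, R)) 0 1;
        0, ((w ^ 2 : Rˣ) : R)] := by
  have hdet : A 0 0 * A 1 1 - A 0 1 * A 1 0 = 1 := by rw [← det_fin_two]; exact A.det_coe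
  have hww : (w : R) ^ 2 * ((w⁻¹ : Rˣ) : R) ^ 2 = 1 := by rw [← mul_pow, w.mul_inv, one_pow]
  have h10 : (E12 t * A⁻¹ * E12 (-t) * hDiag w * A * hDiag w⁻¹ : SL(2, R)) 1 0 = 0 := by
    rw [coe_E12_conj_inv_mul_hDiag_conj]
    dsimp only [of_apply, cons_val_zero, cons_val_one]
    linear_combination (((w⁻¹ : Rˣ) : R) ^ 2 * A 1 0) * htc + A 1 0 * A 0 0 * hww
  have h11 :
      (E12 t * A⁻¹ * E12 (-t) * hDiag w * A * hDiag w⁻¹ : SL(2, R)) 1 1 = ((w ^ 2 : Rˣ) : R) := by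
    rw [coe_E12_conj_inv_mul_hDiag_conj, Units.val_pow_eq_pow_val]
    dsimp only [of_apply, cons_val_zero, cons_val_one]
    linear_combination A 1 1 * htc + (w : R) ^ 2 * hdet
  conv_lhs => rw [eta_fin_two (E12 t * A⁻¹ * E12 (-t) * hDiag w * A * hDiag w⁻¹ : SL(2, R)).1]
  rw [h10, h11, Matrix.SpecialLinearGroup.coe_apply_zero_zero_eq_inv _ _ h10 h11]

theorem dvd_E12_conj_inv_mul_hDiag_conj_apply_zero_one
    (ht : A 1 0 ∣ t) (hw : A 1 0 ∣ (w : R) ^ 2 - 1) :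
    A 1 0 ∣ (E12 t * A⁻¹ * E12 (-t) * hDiag w * A * hDiag w⁻¹ : SL(2, R)) 0 1 := by
  obtain ⟨y, hy⟩ := hw
  rw [coe_E12_conj_inv_mul_hDiag_conj]
  dsimp only [of_apply, cons_val_zero, cons_val_one]
  convert dvd_add (dvd_mul_right (A 1 0) (A 0 1 * A 1 1 * y)) (ht.mul_right
      (A 0 0 * A 1 1 - A 1 1 ^ 2 + t * A 1 0 * A 1 1 - A 1 0 * (w : R) ^ 2 * A 0 1)) using 1
  linear_combination A 0 1 * A 1 1 * hy

end

/-- From the proof of Lemma 3.5: with `u⁴ - 1 = c·x` and `t := a·x`, one has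
`t ∈ cR` and `Y := E₁₂(t) A⁻¹ E₁₂(-t) h(u²) A h(u⁻²)` is upper triangular of
the form `[[u⁻⁴, q], [0, u⁴]]` with `q ∈ cR`. -/
theorem stmt1 {R : Type*} [CommRing R] [IsDomain R] (c : R) (hc : c ≠ 0) (u : Rˣ)
    (hu : (u : R) - 1 ∈ Ideal.span {c ^ 2})
    (A : Matrix.SpecialLinearGroup (Fin 2) R) (hA : A.1 1 0 = c)
    (x : R) (hx : (u : R) ^ 4 - 1 = c * x) (t : R) (ht : t = A.1 0 0 * x) :
    t ∈ Ideal.span {c} ∧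
    ∃ q ∈ Ideal.span {c},
      (E12 t * A⁻¹ * E12 (-t) * hDiag (u ^ 2) * A * hDiag ((u ^ 2)⁻¹)).1 =
        !![((u⁻¹ : Rˣ) : R) ^ 4, q; 0, (u : R) ^ 4] := by
  have hxc : c ∣ x :=
    dvd_of_sq_dvd_sub_one_of_pow_sub_one_eq_mul hc (Ideal.mem_span_singleton.mp hu) hx
  have htc : c ∣ t := ht ▸ hxc.mul_left _
  have hu4 : ((u ^ 2 : Rˣ) : R) ^ 2 - 1 = c * x := by rw [← hx]; push_cast; ring
  refine ⟨Ideal.mem_span_singleton.mpr htc,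
    (E12 t * A⁻¹ * E12 (-t) * hDiag (u ^ 2) * A * hDiag ((u ^ 2)⁻¹)).1 0 1,
    Ideal.mem_span_singleton.mpr ?_, ?_⟩
  · rw [← hA]
    exact dvd_E12_conj_inv_mul_hDiag_conj_apply_zero_one (hA ▸ htc) (hA ▸ ⟨x, hu4⟩)
  · conv_lhs => rw [coe_E12_conj_inv_mul_hDiag_conj_eq (by rw [hA, ht, hu4]; ring)]
    push_cast
    simp only [← pow_mul]
end

section
/- Let R be a commutative integral domain with 1 such that every nonzero ideal of R has finite index in R (as an additive subgroup), and suppose R contains a unit v of infinite multiplicative order. Then R is a ring with many units, i.e., for every nonzero c ∈ R there exists a unit u ∈ R* with u - 1 ∈ c²R and u⁸ - 1 ≠ 0. In fact, u can be taken to be a positive power of v. -/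
/-! The image of `v` in the finite unit group `(R ⧸ c²R)ˣ` has some finite order `k`, so
`v ^ k ≡ 1 mod c²`; and `(v ^ k) ^ 8 = v ^ (8 k) ≠ 1` because `v` has infinite order. -/

theorem Units.exists_pow_sub_one_mem_of_finite_quotient {R : Type*} [CommRing R]
    (I : Ideal R) [Finite (R ⧸ I)] (v : Rˣ) :
    ∃ k : ℕ, 0 < k ∧ ((v ^ k : Rˣ) : R) - 1 ∈ I := by
  let w : (R ⧸ I)ˣ := Units.map (Ideal.Quotient.mk I).toMonoidHom v
  refine ⟨orderOf w, orderOf_pos w, Ideal.Quotient.eq.mp ?_⟩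
  have hw : ((w ^ orderOf w : (R ⧸ I)ˣ) : R ⧸ I) = 1 := by rw [pow_orderOf_eq_one, Units.val_one]
  rw [Units.val_pow_eq_pow_val, Units.coe_map] at hw
  rwa [Units.val_pow_eq_pow_val, map_pow, map_one]

/-- If `R` is an integral domain in which every nonzero ideal has finite index
and `R` contains a unit `v` of infinite order, then `R` is a ring with many
units: for each nonzero `c` there is a unit `u` (a positive power of `v`) with
`u - 1 ∈ c²R` and `u⁸ - 1 ≠ 0`. -/
theorem stmt4 {R : Type*} [CommRing R] [IsDomain R]
    (hfin : ∀ I : Ideal R, I ≠ ⊥ → Finite (R ⧸ I))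
    (v : Rˣ) (hv : ∀ k : ℕ, 0 < k → v ^ k ≠ 1) :
    ∀ c : R, c ≠ 0 → ∃ k : ℕ, 0 < k ∧
      ((v ^ k : Rˣ) : R) - 1 ∈ Ideal.span {c ^ 2} ∧
      ((v ^ k : Rˣ) : R) ^ 8 - 1 ≠ 0 := by
  intro c hc
  have : Finite (R ⧸ Ideal.span {c ^ 2}) :=
    hfin _ (by simpa only [ne_eq, Ideal.span_singleton_eq_bot] using pow_ne_zero 2 hc)
  obtain ⟨k, hk, hmem⟩ := Units.exists_pow_sub_one_mem_of_finite_quotient (Ideal.span {c ^ 2}) v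
  refine ⟨k, hk, hmem, sub_ne_zero.mpr fun h8 => hv (k * 8) (by positivity) (Units.ext ?_)⟩
  simpa [pow_mul] using h8
end

section
/- Let R be a commutative integral domain with 1 which is a ring with many units, such that every nonzero ideal of R has finite index in R, let I ⊴ R be a nonzero ideal, and let ‖·‖ be a non-discrete conjugation-invariant norm on the group E(2,R,I). Then for every ε > 0 there exists a nonzero ideal J ⊴ R with J ⊆ I such that ‖E₁₂(x)‖ ≤ ε for all x ∈ J. (This is the content of the statement that the norm-completion of E₁₂(I) with respect to the restriction of ‖·‖ is a profinite group: the subgroups E₁₂(J) have finite index in E₁₂(I) and form a neighborhood basis of the identity.) -/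
open Matrix

/-!
A non-discrete norm has infinitely many elements in every ball around `1`, so `R` is infinite
(otherwise `E(2,R,I)` is finite) and there is an arbitrarily short non-central `g`. Conjugating
`g` by some `E₂₁(z)`, `z ∈ I`, gives `G` with lower-left entry `C ≠ 0`: that entry is a nonzero
quadratic polynomial in `z`, and `I` is infinite. For a unit `u ≡ 1 mod C⁴`, `diag(u⁻¹, u)` is a
product of elementary matrices with entries in `I`; corrected by a factor `E₁₂(w)` it becomes an
element `B` having `G⁻¹e₁` as an eigenvector, so `h = [G, B]` is upper triangular with corner
entry `u²` and `[h, E₁₂(y)] = E₁₂((u⁴ - 1) y)`. A commutator `[a, b]` has norm at most `2‖a‖`,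
hence `‖E₁₂(x)‖ ≤ 4‖g‖` for all `x` in `J = (u⁴ - 1) I`, which is nonzero because `u⁸ ≠ 1`.
-/

open scoped commutatorElement MatrixGroups

section NonDiscreteNorm

variable {G : Type*} [Group G] {f : G → ℝ}

lemma map_commutatorElement_le (hf_inv : ∀ a, f a⁻¹ = f a)
    (hf_mul : ∀ a b, f (a * b) ≤ f a + f b) (hf_conj : ∀ a b, f (a * b * a⁻¹) = f b)
    (a b : G) : f ⁅a, b⁆ ≤ 2 * f a :=
  calc f ⁅a, b⁆ = f (a * (b * a⁻¹ * b⁻¹)) := by rw [commutatorElement_def]; simp only [mul_assoc]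
    _ ≤ f a + f (b * a⁻¹ * b⁻¹) := hf_mul _ _
    _ = 2 * f a := by rw [hf_conj, hf_inv]; ring

lemma infinite_setOf_lt_of_nondiscrete (hf_nonneg : ∀ a, 0 ≤ f a)
    (hf_zero : ∀ a, f a = 0 ↔ a = 1) (hf_nondisc : ∀ ε : ℝ, 0 < ε → ∃ g, g ≠ 1 ∧ f g < ε)
    {ε : ℝ} (hε : 0 < ε) : {g | f g < ε}.Infinite := by
  intro hfin
  obtain ⟨g₀, hg₀, hg₀ε⟩ := hf_nondisc ε hε
  obtain ⟨m, ⟨hmε, hm⟩, hmin⟩ :=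
    Set.exists_min_image ({g | f g < ε} \ {1}) f hfin.sdiff ⟨g₀, hg₀ε, hg₀⟩
  have hm_pos : 0 < f m := (hf_nonneg m).lt_of_ne' fun h ↦ hm ((hf_zero m).1 h)
  obtain ⟨g, hg, hgm⟩ := hf_nondisc (f m) hm_pos
  exact (hmin g ⟨hgm.trans hmε, hg⟩).not_gt hgm

end NonDiscreteNorm

namespace SL2

open Polynomial Subgroup

variable {R : Type*} [CommRing R] {I : Ideal R}

@[simp] lemma coe_E12 (x : R) : (E12 x : Matrix (Fin 2) (Fin 2) R) = !![1, x; 0, 1] := rfl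

@[simp] lemma coe_E21 (x : R) : (E21 x : Matrix (Fin 2) (Fin 2) R) = !![1, 0; x, 1] := rfl

@[simp] lemma coe_hDiag (u : Rˣ) :
    (hDiag u : Matrix (Fin 2) (Fin 2) R) = !![(u : R), 0; 0, ((u⁻¹ : Rˣ) : R)] := rfl

lemma E12_mem_E2 (x : R) : E12 x ∈ E2 R := subset_closure ⟨x, Or.inl rfl⟩

lemma E21_mem_E2 (x : R) : E21 x ∈ E2 R := subset_closure ⟨x, Or.inr rfl⟩

lemma E12_mem_E2I {x : R} (hx : x ∈ I) : E12 x ∈ E2I R I :=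
  subset_closure ⟨1, one_mem _, x, hx, by simp⟩

lemma E21_mem_E2I {x : R} (hx : x ∈ I) : E21 x ∈ E2I R I := by
  refine subset_closure ⟨E12 1 * E21 (-1) * E12 1,
    mul_mem (mul_mem (E12_mem_E2 1) (E21_mem_E2 (-1))) (E12_mem_E2 1), -x, neg_mem hx, ?_⟩
  rw [eq_mul_inv_iff_mul_eq]
  ext i j
  fin_cases i <;> fin_cases j <;> simp

lemma hDiag_inv_eq {t s : R} (u : Rˣ) (hu : (u : R) - 1 = t ^ 2 * s) :
    hDiag u⁻¹ = E21 (t * s) * E12 t * E21 (-(t * s * ↑u⁻¹)) * E12 (-(t * u)) := by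
  have hUV := u.mul_inv
  ext i j
  fin_cases i <;> fin_cases j <;> simp <;> grind

lemma hDiag_inv_mem_E2I {t : R} (ht : t ∈ I) {u : Rˣ} (hu : (u : R) - 1 ∈ Ideal.span {t ^ 2}) :
    hDiag u⁻¹ ∈ E2I R I := by
  obtain ⟨s, hs⟩ := Ideal.mem_span_singleton'.1 hu
  rw [hDiag_inv_eq (t := t) (s := s) u (by rw [← hs]; ring)]
  refine mul_mem (mul_mem (mul_mem ?_ (E12_mem_E2I ht)) ?_) ?_
  · exact E21_mem_E2I (I.mul_mem_right s ht)
  · exact E21_mem_E2I (neg_mem (I.mul_mem_right _ (I.mul_mem_right s ht)))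
  · exact E12_mem_E2I (neg_mem (I.mul_mem_right _ ht))

lemma E2I_le_ker_map (I : Ideal R) :
    E2I R I ≤ (SpecialLinearGroup.map (Ideal.Quotient.mk I)).ker := by
  rw [E2I, closure_le]
  rintro _ ⟨g, -, x, hx, rfl⟩
  have : SpecialLinearGroup.map (Ideal.Quotient.mk I) (E12 x) = 1 := by
    ext i j
    fin_cases i <;> fin_cases j <;> simp [Ideal.Quotient.eq_zero_iff_mem.2 hx]
  simp [this]

lemma apply_one_zero_mem_of_mem_E2I {g : SL(2, R)} (hg : g ∈ E2I R I) : g 1 0 ∈ I := by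
  have := congrArg (fun M : SL(2, R ⧸ I) ↦ M 1 0) (E2I_le_ker_map I hg)
  simpa [Ideal.Quotient.eq_zero_iff_mem] using this

lemma conj_E21_apply_one_zero (z : R) (g : SL(2, R)) :
    (E21 z * g * (E21 z)⁻¹) 1 0 = g 1 0 + (g 0 0 - g 1 1) * z - g 0 1 * z ^ 2 := by
  simp [adjugate_fin_two, Matrix.mul_apply, vecMul, dotProduct, Fin.sum_univ_two]
  ring

lemma mem_center_of_apply_eq_scalar {g : SL(2, R)} (h10 : g 1 0 = 0) (h01 : g 0 1 = 0)
    (hdiag : g 0 0 = g 1 1) : g ∈ center SL(2, R) := by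
  have hdet := g.2
  rw [det_fin_two] at hdet
  refine Matrix.SpecialLinearGroup.mem_center_iff.2 ⟨g 0 0, ?_, ?_⟩
  · simpa [sq, h10, h01, ← hdiag] using hdet
  · ext i j
    fin_cases i <;> fin_cases j <;> simp [h10, h01, hdiag]

lemma exists_conj_E21_apply_one_zero_ne_zero [IsDomain R] [Infinite R] (hI : I ≠ ⊥)
    {g : SL(2, R)} (hg : g ∉ center SL(2, R)) :
    ∃ z ∈ I, (E21 z * g * (E21 z)⁻¹) 1 0 ≠ 0 := by
  set p : R[X] := C (g 1 0) + C (g 0 0 - g 1 1) * X - C (g 0 1) * X ^ 2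
  have hp : p ≠ 0 := by
    intro hp
    obtain ⟨h0, h1, h2⟩ : p.coeff 0 = 0 ∧ p.coeff 1 = 0 ∧ p.coeff 2 = 0 := by simp [hp]
    simp only [p, coeff_add, coeff_sub, coeff_C_mul, coeff_C, coeff_X, coeff_X_pow] at h0 h1 h2
    norm_num at h0 h1 h2
    exact hg (mem_center_of_apply_eq_scalar h0 h2 (sub_eq_zero.1 h1))
  obtain ⟨y, hyI, hy⟩ := (Submodule.ne_bot_iff I).1 hI
  have hIinf : (I : Set R).Infinite :=
    Set.infinite_of_injective_forall_mem (mul_left_injective₀ hy) fun r ↦ I.mul_mem_left r hyI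
  obtain ⟨z, hzI, hz⟩ := hIinf.exists_notMem_finite (finite_setOfPred_isRoot hp)
  refine ⟨z, hzI, ?_⟩
  rw [conj_E21_apply_one_zero]
  simpa [p] using hz

lemma commutatorElement_E12_of_apply_one_zero {S : SL(2, R)} (hS : S 1 0 = 0) (y : R) :
    ⁅S, E12 y⁆ = E12 ((S 0 0 ^ 2 - 1) * y) := by
  have hdet := S.2
  rw [det_fin_two] at hdet
  ext i j
  fin_cases i <;> fin_cases j <;>
    simp [commutatorElement_def, adjugate_fin_two, Matrix.mul_apply, Fin.sum_univ_two, hS] <;>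
    grind

/- `w` makes `G⁻¹ e₁ = (G 1 1, -G 1 0)` an eigenvector of `B = hDiag u⁻¹ * E12 w` with eigenvalue
`u`, so that `G B G⁻¹`, and with it `⁅G, B⁆`, is upper triangular. -/
lemma commutatorElement_hDiag_inv_mul_E12_apply (G : SL(2, R)) {u : Rˣ} {s w : R}
    (hu : (u : R) - 1 = G 1 0 ^ 4 * s) (hw : w = -(G 1 1 * G 1 0 ^ 3 * s * (1 + u))) :
    ⁅G, hDiag u⁻¹ * E12 w⁆ 1 0 = 0 ∧ ⁅G, hDiag u⁻¹ * E12 w⁆ 0 0 = u ^ 2 := by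
  have hdet := G.2
  have hUV := u.mul_inv
  rw [det_fin_two] at hdet
  subst hw
  constructor <;>
    simp [commutatorElement_def, adjugate_fin_two, Matrix.mul_apply, Fin.sum_univ_two] <;> grind

lemma finite_center [IsDomain R] : (center SL(2, R) : Set SL(2, R)).Finite :=
  have : NeZero (Fintype.card (Fin 2)) := ⟨by simp⟩
  have : Finite (center SL(2, R)) :=
    .of_equiv _ (Matrix.SpecialLinearGroup.center_equiv_rootsOfUnity' 0).symm.toEquiv
  Set.toFinite _

lemma exists_upperTriangular_commutatorElement (G : E2I R I) {u : Rˣ}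
    (hu : (u : R) - 1 ∈ Ideal.span {((G : SL(2, R)) 1 0 ^ 2) ^ 2}) :
    ∃ B : E2I R I, ((⁅G, B⁆ : E2I R I) : SL(2, R)) 1 0 = 0 ∧
      ((⁅G, B⁆ : E2I R I) : SL(2, R)) 0 0 = u ^ 2 := by
  have hC := apply_one_zero_mem_of_mem_E2I G.2
  obtain ⟨s, hs⟩ := Ideal.mem_span_singleton'.1 hu
  have hw : -((G : SL(2, R)) 1 1 * (G : SL(2, R)) 1 0 ^ 3 * s * (1 + u)) ∈ I :=
    neg_mem <| I.mul_mem_right _ <| I.mul_mem_right _ <|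
      I.mul_mem_left _ (I.pow_mem_of_mem hC 3 three_pos)
  exact ⟨⟨_, mul_mem (hDiag_inv_mem_E2I (I.pow_mem_of_mem hC 2 two_pos) hu) (E12_mem_E2I hw)⟩,
    commutatorElement_hDiag_inv_mul_E12_apply (G : SL(2, R)) (by rw [← hs]; ring) rfl⟩

lemma map_E12_le_of_apply_one_zero {f : E2I R I → ℝ} (hf_inv : ∀ a, f a⁻¹ = f a)
    (hf_mul : ∀ a b, f (a * b) ≤ f a + f b) (hf_conj : ∀ a b, f (a * b * a⁻¹) = f b)
    {h : E2I R I} (hh : (h : SL(2, R)) 1 0 = 0) {x : R}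
    (hx : x ∈ Ideal.span {(h : SL(2, R)) 0 0 ^ 2 - 1} * I) (hxI : E12 x ∈ E2I R I) :
    f ⟨E12 x, hxI⟩ ≤ 2 * f h := by
  obtain ⟨y, hyI, rfl⟩ := Ideal.mem_span_singleton_mul.1 hx
  have : (⟨E12 _, hxI⟩ : E2I R I) = ⁅h, ⟨E12 y, E12_mem_E2I hyI⟩⁆ :=
    Subtype.ext (commutatorElement_E12_of_apply_one_zero hh y).symm
  rw [this]
  exact map_commutatorElement_le hf_inv hf_mul hf_conj _ _

end SL2

theorem stmt5_general {R : Type*} [CommRing R] [IsDomain R]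
    (hMU : ∀ c : R, c ≠ 0 → ∃ u : Rˣ,
      (u : R) - 1 ∈ Ideal.span {c ^ 2} ∧ (u : R) ^ 8 - 1 ≠ 0)
    (I : Ideal R) (hI : I ≠ ⊥)
    (f : (E2I R I) → ℝ)
    (hf_nonneg : ∀ a, 0 ≤ f a)
    (hf_zero : ∀ a, f a = 0 ↔ a = 1)
    (hf_inv : ∀ a, f a⁻¹ = f a)
    (hf_mul : ∀ a b, f (a * b) ≤ f a + f b)
    (hf_conj : ∀ a b, f (a * b * a⁻¹) = f b)
    (hf_nondisc : ∀ ε : ℝ, 0 < ε → ∃ g : (E2I R I), g ≠ 1 ∧ f g < ε) :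
    ∀ ε : ℝ, 0 < ε → ∃ J : Ideal R, J ≠ ⊥ ∧ J ≤ I ∧
      ∀ x ∈ J, ∀ hx : E12 x ∈ E2I R I, f ⟨E12 x, hx⟩ ≤ ε := by
  intro ε hε
  have hsmall := infinite_setOf_lt_of_nondiscrete hf_nonneg hf_zero hf_nondisc
    (by positivity : 0 < ε / 4)
  rcases finite_or_infinite R with hR | hR
  · exact (hsmall (Set.toFinite _)).elim
  obtain ⟨g, hgε, hgc⟩ :=
    hsmall.exists_notMem_finite (SL2.finite_center.preimage Subtype.val_injective.injOn)
  obtain ⟨z, hzI, hz⟩ := SL2.exists_conj_E21_apply_one_zero_ne_zero hI hgc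
  set G : E2I R I := ⟨E21 z, SL2.E21_mem_E2I hzI⟩ * g * ⟨E21 z, SL2.E21_mem_E2I hzI⟩⁻¹
  obtain ⟨u, hu, hu8⟩ := hMU _ (pow_ne_zero 2 hz)
  obtain ⟨B, h10, h00⟩ := SL2.exists_upperTriangular_commutatorElement G hu
  have hu4 : (u : R) ^ 4 - 1 ≠ 0 := fun h ↦ hu8 (by linear_combination ((u : R) ^ 4 + 1) * h)
  refine ⟨Ideal.span {(u : R) ^ 4 - 1} * I, by simp [hu4, hI],
    Ideal.mul_le_right, fun x hx hxI ↦ ?_⟩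
  calc f ⟨E12 x, hxI⟩ ≤ 2 * f ⁅G, B⁆ :=
        SL2.map_E12_le_of_apply_one_zero hf_inv hf_mul hf_conj h10 (by rwa [h00, ← pow_mul]) hxI
    _ ≤ 2 * (2 * f G) := by gcongr; exact map_commutatorElement_le hf_inv hf_mul hf_conj _ _
    _ ≤ ε := by rw [hf_conj]; linarith [show f g < ε / 4 from hgε]

/-- Lemma 3.4 (tech_lemma_1), key content: over a domain with many units in
which every nonzero ideal has finite index, a non-discrete conjugation-invariant
norm on `E(2,R,I)` admits, for each `ε > 0`, a nonzero ideal `J ⊆ I` with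
`‖E₁₂(x)‖ ≤ ε` for all `x ∈ J` (so the norm-completion of `E₁₂(I)` is
profinite). -/
theorem stmt5 {R : Type*} [CommRing R] [IsDomain R]
    (hMU : ∀ c : R, c ≠ 0 → ∃ u : Rˣ,
      (u : R) - 1 ∈ Ideal.span {c ^ 2} ∧ (u : R) ^ 8 - 1 ≠ 0)
    (hfin : ∀ J : Ideal R, J ≠ ⊥ → Finite (R ⧸ J))
    (I : Ideal R) (hI : I ≠ ⊥)
    (f : (E2I R I) → ℝ)
    (hf_nonneg : ∀ a, 0 ≤ f a)
    (hf_zero : ∀ a, f a = 0 ↔ a = 1)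
    (hf_inv : ∀ a, f a⁻¹ = f a)
    (hf_mul : ∀ a b, f (a * b) ≤ f a + f b)
    (hf_conj : ∀ a b, f (a * b * a⁻¹) = f b)
    (hf_nondisc : ∀ ε : ℝ, 0 < ε → ∃ g : (E2I R I), g ≠ 1 ∧ f g < ε) :
    ∀ ε : ℝ, 0 < ε → ∃ J : Ideal R, J ≠ ⊥ ∧ J ≤ I ∧
      ∀ x ∈ J, ∀ hx : E12 x ∈ E2I R I, f ⟨E12 x, hx⟩ ≤ ε :=
  stmt5_general hMU I hI f hf_nonneg hf_zero hf_inv hf_mul hf_conj hf_nondisc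
end
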